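/- Fix θ > 0. For each δ > 0 let σ(δ) > 0 and define the water-filled average input energy S(δ) = Σ_{k=0}^∞ max(0, σ(δ)² − θ² e^{(2k+1)δ}) and the capacity (in nats per transmission) C(δ) = Σ_{k=0}^∞ max(0, (1/2)·ln(σ(δ)²/(θ² e^{(2k+1)δ}))). Assume that δ·S(δ) stays bounded as δ → 0+. Then C(δ)/coth δ − (1/2)·[w₀(S(δ)/((coth δ/2)·θ²))]² → 0 as δ → 0+. -/

import Mathlib

/-!
Water-filling at level `σ² = θ² e^b` keeps exactly the channels with `(2k+1)δ < b`. If `N` is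
their number and `t = Nδ`, then `b = 2t + O(δ)`, the capacity is `(Nb − N²δ)/2`, and a
telescoping geometric sum gives the energy `θ² (N e^b − (e^{2t} − 1) / (2 sinh δ))`. Hence
`C / coth δ` and `2 S tanh δ / θ²` are within `o(1)` of `t²/2` and `g t = (2t − 1) e^{2t} + 1`,
uniformly for bounded `t`, and `t` stays bounded because `δ S ≥ θ² (t² − tδ)`. Since
`w₀ (g t) = t` and `g x − 2x²` is increasing, `w₀²` is `1/2`-Lipschitz, which closes the
argument.
-/

open Real Filter Finset Topology

namespace HeatChannel

noncomputable def normalizedEnergy (x : ℝ) : ℝ := (2 * x - 1) * exp (2 * x) + 1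

theorem monotone_normalizedEnergy_sub_two_mul_sq :
    Monotone fun x ↦ normalizedEnergy x - 2 * x ^ 2 := by
  refine monotone_of_hasDerivAt_nonneg (f' := fun x ↦ 4 * x * (exp (2 * x) - 1)) (fun x ↦ ?_)
    fun x ↦ ?_
  · have h := ((((hasDerivAt_id' x).const_mul 2).sub_const 1).fun_mul
      ((hasDerivAt_id' x).const_mul 2).exp).add_const 1 |>.fun_sub
      ((hasDerivAt_pow 2 x).const_mul 2)
    exact h.congr_deriv (by ring)
  · rcases le_total 0 x with hx | hx
    · have : 1 ≤ exp (2 * x) := one_le_exp (by linarith)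
      positivity
    · have : exp (2 * x) ≤ 1 := exp_le_one_iff.2 (by linarith)
      exact mul_nonneg_of_nonpos_of_nonpos (by linarith) (by linarith)

theorem normalizedEnergy_zero : normalizedEnergy 0 = 0 := by
  simp [normalizedEnergy]

theorem two_mul_sq_le_normalizedEnergy {x : ℝ} (hx : 0 ≤ x) : 2 * x ^ 2 ≤ normalizedEnergy x := by
  simpa [normalizedEnergy_zero] using monotone_normalizedEnergy_sub_two_mul_sq hx

theorem abs_sq_sub_sq_le_of_normalizedEnergy_eq {w : ℝ → ℝ}
    (hw : ∀ y, 0 ≤ y → 0 ≤ w y ∧ normalizedEnergy (w y) = y) {y₁ y₂ : ℝ} (h₁ : 0 ≤ y₁)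
    (h₂ : 0 ≤ y₂) :
    |w y₁ ^ 2 - w y₂ ^ 2| ≤ |y₁ - y₂| / 2 := by
  obtain ⟨hw₁, hy₁⟩ := hw y₁ h₁
  obtain ⟨hw₂, hy₂⟩ := hw y₂ h₂
  wlog hle : w y₂ ≤ w y₁ generalizing y₁ y₂
  · rw [abs_sub_comm, abs_sub_comm y₁]
    exact this h₂ h₁ hw₂ hy₂ hw₁ hy₁ (le_of_not_ge hle)
  have key := monotone_normalizedEnergy_sub_two_mul_sq hle
  simp only [hy₁, hy₂] at key
  have hsq : w y₂ ^ 2 ≤ w y₁ ^ 2 := pow_le_pow_left₀ hw₂ hle 2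
  rw [abs_of_nonneg (sub_nonneg.2 hsq), abs_of_nonneg (by linarith)]
  linarith

theorem tsum_max_zero_eq_sum_range {f : ℕ → ℝ} {N : ℕ} (hf : ∀ k, 0 < f k ↔ k < N) :
    ∑' k, max 0 (f k) = ∑ k ∈ range N, f k := by
  rw [tsum_eq_sum (s := range N) fun k hk ↦ max_eq_left <| not_lt.1 fun h ↦ hk <|
    mem_range.2 <| (hf k).1 h]
  exact sum_congr rfl fun k hk ↦ max_eq_right ((hf k).2 (mem_range.1 hk)).le

theorem sum_range_sub_odd_mul (N : ℕ) (b δ : ℝ) :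
    ∑ k ∈ range N, (b - (2 * k + 1) * δ) = N * b - N ^ 2 * δ := by
  induction N with
  | zero => simp
  | succ n ih => rw [sum_range_succ, ih]; push_cast; ring

theorem sum_range_exp_odd_mul_mul_two_sinh (N : ℕ) (δ : ℝ) :
    (∑ k ∈ range N, exp ((2 * k + 1) * δ)) * (2 * sinh δ) = exp (2 * N * δ) - 1 := by
  have htel : ∀ k : ℕ, exp ((2 * k + 1) * δ) * (2 * sinh δ) =
      exp (2 * (k + 1 : ℕ) * δ) - exp (2 * k * δ) := fun k ↦ by
    rw [sinh_eq, mul_div_cancel₀ _ two_ne_zero, mul_sub, ← exp_add, ← exp_add]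
    push_cast; ring_nf
  rw [sum_mul, sum_congr rfl fun k _ ↦ htel k, sum_range_sub (fun k : ℕ ↦ exp (2 * k * δ))]
  simp

theorem sub_le_exp_sub_exp {x y : ℝ} (hy : 0 ≤ y) (hyx : y ≤ x) : x - y ≤ exp x - exp y := by
  have h := add_one_le_exp (x - y)
  have h1 : 1 ≤ exp y := one_le_exp hy
  rw [exp_sub] at h
  field_simp at h
  nlinarith

/-- The number of channels `k` that water-filling at level `θ² e^b` keeps active,
i.e. with `(2k+1)δ < b`. -/
noncomputable def activeCount (δ b : ℝ) : ℕ := ⌈(b / δ - 1) / 2⌉₊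

section WaterFilling

variable {θ δ b : ℝ}

theorem lt_activeCount_iff (hδ : 0 < δ) {k : ℕ} :
    k < activeCount δ b ↔ (2 * k + 1) * δ < b := by
  rw [activeCount, Nat.lt_ceil, lt_div_iff₀ two_pos, lt_sub_iff_add_lt, lt_div_iff₀ hδ,
    mul_comm (k : ℝ)]

theorem abs_sub_two_mul_activeCount_le (hδ : 0 < δ) (hN : 0 < activeCount δ b) :
    |b - 2 * (activeCount δ b * δ)| ≤ δ := by
  have hlt := (lt_activeCount_iff hδ).1 (Nat.sub_one_lt hN.ne')
  have hge := mt (lt_activeCount_iff (b := b) hδ).2 (lt_irrefl _)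
  rw [Nat.cast_sub hN] at hlt
  rw [abs_le]; push_cast at hlt; constructor <;> nlinarith

theorem tsum_max_zero_energy (hθ : θ ≠ 0) (hδ : 0 < δ) :
    ∑' k : ℕ, max 0 (θ ^ 2 * exp b - θ ^ 2 * exp ((2 * k + 1) * δ)) =
      θ ^ 2 * ∑ k ∈ range (activeCount δ b), (exp b - exp ((2 * k + 1) * δ)) := by
  rw [mul_sum, tsum_max_zero_eq_sum_range (N := activeCount δ b) fun k ↦ ?_]
  · simp only [mul_sub]
  rw [lt_activeCount_iff hδ, ← mul_sub, mul_pos_iff_of_pos_left (by positivity), sub_pos,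
    exp_lt_exp]

theorem tsum_max_zero_capacity (hθ : θ ≠ 0) (hδ : 0 < δ) :
    ∑' k : ℕ, max 0 ((1 / 2) * log (θ ^ 2 * exp b / (θ ^ 2 * exp ((2 * k + 1) * δ)))) =
      (activeCount δ b * b - activeCount δ b ^ 2 * δ) / 2 := by
  have hlog : ∀ k : ℕ, (1 / 2) * log (θ ^ 2 * exp b / (θ ^ 2 * exp ((2 * k + 1) * δ))) =
      (b - (2 * k + 1) * δ) / 2 := fun k ↦ by
    rw [mul_div_mul_left _ _ (by positivity), ← exp_sub, log_exp]; ring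
  simp_rw [hlog]
  rw [tsum_max_zero_eq_sum_range fun k ↦ ?_, ← sum_div, sum_range_sub_odd_mul]
  rw [lt_activeCount_iff hδ]; constructor <;> intro h <;> linarith

theorem sq_sub_mul_le_mul_energy (hδ : 0 < δ) :
    (activeCount δ b * δ) ^ 2 - activeCount δ b * δ * δ ≤
      δ * ∑ k ∈ range (activeCount δ b), (exp b - exp ((2 * k + 1) * δ)) := by
  have hsum : activeCount δ b * b - activeCount δ b ^ 2 * δ ≤
      ∑ k ∈ range (activeCount δ b), (exp b - exp ((2 * k + 1) * δ)) := by
    rw [← sum_range_sub_odd_mul]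
    exact sum_le_sum fun k hk ↦ sub_le_exp_sub_exp (by positivity)
      ((lt_activeCount_iff hδ).1 (mem_range.1 hk)).le
  refine le_trans ?_ (mul_le_mul_of_nonneg_left hsum hδ.le)
  rcases (activeCount δ b).eq_zero_or_pos with hN | hN
  · simp [hN]
  have hb := (abs_le.1 (abs_sub_two_mul_activeCount_le hδ hN)).1
  have ht : 0 ≤ (activeCount δ b : ℝ) * δ := by positivity
  nlinarith [mul_nonneg ht (by linarith : 0 ≤ b - 2 * (activeCount δ b * δ) + δ)]

theorem activeCount_mul_le (hθ : θ ≠ 0) (hδ : 0 < δ) (hδ1 : δ ≤ 1) {M : ℝ}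
    (hM : δ * (θ ^ 2 * ∑ k ∈ range (activeCount δ b), (exp b - exp ((2 * k + 1) * δ))) ≤ M) :
    activeCount δ b * δ ≤ 1 + M / θ ^ 2 := by
  have hθ2 : 0 < θ ^ 2 := by positivity
  have h := sq_sub_mul_le_mul_energy (b := b) hδ
  have hle : δ * ∑ k ∈ range (activeCount δ b), (exp b - exp ((2 * k + 1) * δ)) ≤ M / θ ^ 2 := by
    rw [le_div_iff₀ hθ2]; linarith
  have ht : 0 ≤ (activeCount δ b : ℝ) * δ := by positivity
  nlinarith [mul_le_mul_of_nonneg_left hδ1 ht, sq_nonneg (activeCount δ b * δ - 1)]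

end WaterFilling

variable {t b δ ρ ς T : ℝ}

theorem abs_capacity_approx_sub_sq_le (ht : 0 ≤ t) (htT : t ≤ T) (hδ : 0 ≤ δ) (hρ : 0 ≤ ρ)
    (hb : 0 < t → |b - 2 * t| ≤ δ) :
    |(t * b - t ^ 2) * ρ - t ^ 2| ≤ T ^ 2 * |ρ - 1| + T * δ * ρ := by
  rcases ht.eq_or_lt with rfl | ht
  · have : 0 ≤ T := htT
    simpa using (by positivity : 0 ≤ T ^ 2 * |ρ - 1| + T * δ * ρ)
  have hsplit : (t * b - t ^ 2) * ρ - t ^ 2 = t ^ 2 * (ρ - 1) + t * (b - 2 * t) * ρ := by ring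
  calc |(t * b - t ^ 2) * ρ - t ^ 2|
      ≤ t ^ 2 * |ρ - 1| + t * |b - 2 * t| * ρ := by
        rw [hsplit]
        refine (abs_add_le _ _).trans_eq ?_
        rw [abs_mul, abs_mul, abs_mul, abs_of_pos ht, abs_of_nonneg hρ, abs_of_nonneg (sq_nonneg t)]
    _ ≤ T ^ 2 * |ρ - 1| + T * δ * ρ := by
        have := hb ht
        have : 0 ≤ T := ht.le.trans htT
        gcongr

theorem abs_energy_approx_sub_normalizedEnergy_le (ht : 0 ≤ t) (htT : t ≤ T) (hδ : 0 ≤ δ)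
    (hδ1 : δ ≤ 1) (hρ : 0 ≤ ρ) (hb : 0 < t → |b - 2 * t| ≤ δ) :
    |2 * t * exp b * ρ - (exp (2 * t) - 1) * ς - normalizedEnergy t| ≤
      2 * T * exp (2 * T) * (2 * δ * ρ + |ρ - 1|) + exp (2 * T) * |ς - 1| := by
  rcases ht.eq_or_lt with rfl | ht
  · have : 0 ≤ T := htT
    simpa [normalizedEnergy_zero] using (by positivity :
      0 ≤ 2 * T * exp (2 * T) * (2 * δ * ρ + |ρ - 1|) + exp (2 * T) * |ς - 1|)
  have hu := hb ht
  have hT : 0 ≤ T := ht.le.trans htT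
  have hsplit : 2 * t * exp b * ρ - (exp (2 * t) - 1) * ς - normalizedEnergy t =
      2 * t * exp (2 * t) * (ρ * exp (b - 2 * t) - 1) - (exp (2 * t) - 1) * (ς - 1) := by
    rw [normalizedEnergy, exp_sub]; field_simp; ring
  have hexp : |ρ * exp (b - 2 * t) - 1| ≤ 2 * δ * ρ + |ρ - 1| := calc
    |ρ * exp (b - 2 * t) - 1| = |ρ * (exp (b - 2 * t) - 1) + (ρ - 1)| := by ring_nf
    _ ≤ ρ * |exp (b - 2 * t) - 1| + |ρ - 1| := by
      grw [abs_add_le, abs_mul, abs_of_nonneg hρ]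
    _ ≤ ρ * (2 * δ) + |ρ - 1| := by
      gcongr
      exact (abs_exp_sub_one_le (hu.trans hδ1)).trans (by linarith)
    _ = 2 * δ * ρ + |ρ - 1| := by ring
  have hexp2 : exp (2 * t) ≤ exp (2 * T) := exp_le_exp.2 (by linarith)
  have hexp1 : 1 ≤ exp (2 * t) := one_le_exp (by linarith)
  have h₁ : |2 * t * exp (2 * t) * (ρ * exp (b - 2 * t) - 1)| ≤
      2 * T * exp (2 * T) * (2 * δ * ρ + |ρ - 1|) := by
    rw [abs_mul, abs_of_pos (by positivity : 0 < 2 * t * exp (2 * t))]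
    gcongr
  have h₂ : |(exp (2 * t) - 1) * (ς - 1)| ≤ exp (2 * T) * |ς - 1| := by
    rw [abs_mul, abs_of_nonneg (by linarith : 0 ≤ exp (2 * t) - 1)]
    gcongr
    linarith
  rw [hsplit]
  exact (abs_sub _ _).trans (add_le_add h₁ h₂)

theorem capacity_div_coth (hδ : δ ≠ 0) (N : ℕ) (b : ℝ) :
    (N * b - N ^ 2 * δ) / 2 / (cosh δ / sinh δ) =
      (N * δ * b - (N * δ) ^ 2) * (tanh δ / δ) / 2 := by
  rw [tanh_eq_sinh_div_cosh]
  field_simp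

theorem energy_div_coth {θ : ℝ} (hθ : θ ≠ 0) (hδ : δ ≠ 0) (N : ℕ) (b : ℝ) :
    (θ ^ 2 * ∑ k ∈ range N, (exp b - exp ((2 * k + 1) * δ))) / ((cosh δ / sinh δ / 2) * θ ^ 2) =
      2 * (N * δ) * exp b * (tanh δ / δ) - (exp (2 * (N * δ)) - 1) * (cosh δ)⁻¹ := by
  have hsinh : sinh δ ≠ 0 := sinh_ne_zero.2 hδ
  have hgeo := sum_range_exp_odd_mul_mul_two_sinh N δ
  rw [sum_sub_distrib, sum_const, card_range, nsmul_eq_mul, tanh_eq_sinh_div_cosh,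
    eq_div_of_mul_eq (mul_ne_zero two_ne_zero hsinh) hgeo]
  field_simp

theorem tendsto_tanh_div_self : Tendsto (fun δ ↦ tanh δ / δ) (𝓝[≠] 0) (𝓝 1) := by
  have hsinh := (hasDerivAt_sinh 0).tendsto_slope_zero
  have hcosh : Tendsto cosh (𝓝[≠] 0) (𝓝 1) := by
    simpa using continuous_cosh.continuousAt.tendsto.mono_left (nhdsWithin_le_nhds (a := 0))
  simp only [zero_add, sinh_zero, sub_zero, smul_eq_mul, cosh_zero] at hsinh
  refine (div_one (1 : ℝ) ▸ hsinh.div hcosh one_ne_zero).congr fun δ ↦ ?_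
  rw [Pi.div_apply, tanh_eq_sinh_div_cosh]
  ring

noncomputable def errorBound (T δ : ℝ) : ℝ :=
  T ^ 2 * |tanh δ / δ - 1| + T * δ * (tanh δ / δ) +
    (2 * T * exp (2 * T) * (2 * δ * (tanh δ / δ) + |tanh δ / δ - 1|) +
      exp (2 * T) * |(cosh δ)⁻¹ - 1|)

theorem tendsto_errorBound (T : ℝ) : Tendsto (errorBound T) (𝓝[>] 0) (𝓝 0) := by
  have hρ := tendsto_tanh_div_self.mono_left (nhdsGT_le_nhdsNE 0)
  have hδ : Tendsto (fun δ : ℝ ↦ δ) (𝓝[>] 0) (𝓝 0) := nhdsWithin_le_nhds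
  have hς : Tendsto (fun δ ↦ (cosh δ)⁻¹) (𝓝[>] 0) (𝓝 1) := by
    simpa using ((continuous_cosh.tendsto 0).inv₀ (by simp)).mono_left nhdsWithin_le_nhds
  have := ((((hρ.sub_const 1).abs.const_mul (T ^ 2)).add ((hδ.const_mul T).mul hρ)).add
    ((((hδ.const_mul 2).mul hρ).add (hρ.sub_const 1).abs).const_mul (2 * T * exp (2 * T)) |>.add
      ((hς.sub_const 1).abs.const_mul (exp (2 * T)))))
  norm_num at this
  exact this

theorem abs_capacity_div_coth_sub_le {θ : ℝ} (hθ : θ ≠ 0) {w₀ : ℝ → ℝ}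
    (hw₀_left : ∀ x, 0 ≤ x → w₀ (normalizedEnergy x) = x)
    (hw₀_right : ∀ y, 0 ≤ y → 0 ≤ w₀ y ∧ normalizedEnergy (w₀ y) = y)
    (hδ : 0 < δ) (hδ1 : δ ≤ 1) (hT : activeCount δ b * δ ≤ T) :
    |(activeCount δ b * b - activeCount δ b ^ 2 * δ) / 2 / (cosh δ / sinh δ) -
      1 / 2 * w₀ ((θ ^ 2 * ∑ k ∈ range (activeCount δ b), (exp b - exp ((2 * k + 1) * δ))) /
        ((cosh δ / sinh δ / 2) * θ ^ 2)) ^ 2| ≤ errorBound T δ := by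
  have hA : 0 ≤ (θ ^ 2 * ∑ k ∈ range (activeCount δ b), (exp b - exp ((2 * k + 1) * δ))) /
      ((cosh δ / sinh δ / 2) * θ ^ 2) := by
    have : 0 < sinh δ := sinh_pos_iff.2 hδ
    refine div_nonneg (mul_nonneg (sq_nonneg θ) (sum_nonneg fun k hk ↦ ?_)) (by positivity)
    exact sub_nonneg.2 (exp_le_exp.2 ((lt_activeCount_iff hδ).1 (mem_range.1 hk)).le)
  rw [energy_div_coth hθ hδ.ne'] at hA
  rw [capacity_div_coth hδ.ne', energy_div_coth hθ hδ.ne']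
  set t : ℝ := activeCount δ b * δ
  have ht : 0 ≤ t := by positivity
  have hρ : 0 ≤ tanh δ / δ := by
    rw [tanh_eq_sinh_div_cosh]
    exact div_nonneg (div_nonneg (sinh_nonneg_iff.2 hδ.le) (cosh_pos δ).le) hδ.le
  have hb : 0 < t → |b - 2 * t| ≤ δ := fun ht ↦
    abs_sub_two_mul_activeCount_le hδ (Nat.cast_pos.1 (pos_of_mul_pos_left ht hδ.le))
  have hcap := abs_capacity_approx_sub_sq_le ht hT hδ.le hρ hb
  have heng := abs_energy_approx_sub_normalizedEnergy_le (ς := (cosh δ)⁻¹) ht hT hδ.le hδ1 hρ hb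
  have hw := abs_sq_sub_sq_le_of_normalizedEnergy_eq hw₀_right hA (y₂ := normalizedEnergy t)
    (by nlinarith [two_mul_sq_le_normalizedEnergy ht])
  rw [hw₀_left t ht] at hw
  set X := (t * b - t ^ 2) * (tanh δ / δ)
  set A := 2 * t * exp b * (tanh δ / δ) - (exp (2 * t) - 1) * (cosh δ)⁻¹
  calc |X / 2 - 1 / 2 * w₀ A ^ 2| = |(X - t ^ 2) / 2 - (w₀ A ^ 2 - t ^ 2) / 2| := by ring_nf
    _ ≤ |X - t ^ 2| / 2 + |w₀ A ^ 2 - t ^ 2| / 2 := by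
      grw [abs_sub, abs_div, abs_div, abs_two]
    _ ≤ errorBound T δ := by
      unfold errorBound
      linarith [abs_nonneg (X - t ^ 2), abs_nonneg (A - normalizedEnergy t)]

end HeatChannel

open HeatChannel in
theorem heat_channel_capacity_first_formula
    (θ : ℝ) (hθ : 0 < θ)
    (σ : ℝ → ℝ) (hσ : ∀ δ > 0, 0 < σ δ)
    (w₀ : ℝ → ℝ)
    (hw₀_left : ∀ x : ℝ, 0 ≤ x → w₀ ((2 * x - 1) * Real.exp (2 * x) + 1) = x)
    (hw₀_right : ∀ y : ℝ, 0 ≤ y →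
      0 ≤ w₀ y ∧ (2 * w₀ y - 1) * Real.exp (2 * w₀ y) + 1 = y)
    (S C : ℝ → ℝ)
    (hS : ∀ δ > 0, S δ =
      ∑' k : ℕ, max 0 (σ δ ^ 2 - θ ^ 2 * Real.exp ((2 * (k : ℝ) + 1) * δ)))
    (hC : ∀ δ > 0, C δ =
      ∑' k : ℕ, max 0 ((1 / 2) *
        Real.log (σ δ ^ 2 / (θ ^ 2 * Real.exp ((2 * (k : ℝ) + 1) * δ)))))
    (hbound : ∃ M : ℝ, ∀ᶠ δ in nhdsWithin 0 (Set.Ioi 0), δ * S δ ≤ M) :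
    Filter.Tendsto
      (fun δ : ℝ =>
        C δ / (Real.cosh δ / Real.sinh δ) -
          (1 / 2) * (w₀ (S δ / ((Real.cosh δ / Real.sinh δ / 2) * θ ^ 2))) ^ 2)
      (nhdsWithin 0 (Set.Ioi 0)) (nhds 0) := by
  obtain ⟨M, hM⟩ := hbound
  refine squeeze_zero_norm' ?_ (tendsto_errorBound (1 + M / θ ^ 2))
  filter_upwards [hM, Ioc_mem_nhdsGT zero_lt_one] with δ hMδ ⟨hδ, hδ1⟩
  obtain ⟨b, hb⟩ : ∃ b, σ δ ^ 2 = θ ^ 2 * exp b := by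
    have := hσ δ hδ
    exact ⟨log (σ δ ^ 2 / θ ^ 2), by rw [exp_log (by positivity)]; field_simp⟩
  rw [hS δ hδ, hb, tsum_max_zero_energy hθ.ne' hδ] at hMδ
  rw [norm_eq_abs, hS δ hδ, hC δ hδ, hb, tsum_max_zero_energy hθ.ne' hδ,
    tsum_max_zero_capacity hθ.ne' hδ]
  exact abs_capacity_div_coth_sub_le hθ.ne' hw₀_left hw₀_right hδ hδ1
    (activeCount_mul_le hθ.ne' hδ hδ1 hMδ)
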